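/- Let ω be a control function on [0,T] and 0 < δ ≤ Δ. Then N_δ(ω) ≤ (Δ/δ)(2 N_Δ(ω) + 2) , and in particular N_δ(ω) ≤ (2/δ)(N_1(ω) + 1) when δ ≤ 1 and Δ = 1. -/

import Mathlib

open Set

/-- The greedy stopping-time sequence associated to a control `ω`, threshold `δ`,
on the interval `[0,T]`. -/
noncomputable def tauSeq (T : ℝ) (ω : ℝ → ℝ → ℝ) (δ : ℝ) : ℕ → ℝ
  | 0 => 0
  | n + 1 =>
      sInf ({u : ℝ | tauSeq T ω δ n < u ∧ u ≤ T ∧ δ ≤ ω (tauSeq T ω δ n) u} ∪ {T})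

/-- `N_δ(ω) = sup{n : τ_n < T}`. -/
noncomputable def Ncount (T : ℝ) (ω : ℝ → ℝ → ℝ) (δ : ℝ) : ℕ :=
  sSup {n : ℕ | tauSeq T ω δ n < T}

/-!
Write `τ` and `σ` for the greedy sequences at scales `δ` and `Δ`, and let `m = ⌈Δ/δ⌉`.
If `σ k ≤ τ i` and `τ (i + m) < T`, superadditivity and `ω ≥ 0` give
`Δ ≤ m δ ≤ ω (τ i) (τ (i + m)) ≤ ω (σ k) (τ (i + m))`, while `ω (σ k) u < Δ` for `u < σ (k + 1)`;
hence `σ (k + 1) ≤ τ (i + m)`. So every block of `m` consecutive `δ`-times passes a `Δ`-time,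
which gives `N_δ ≤ m (N_Δ + 1) ≤ (Δ/δ)(2 N_Δ + 2)`.
-/

section TauSeq

variable {T δ : ℝ} {ω : ℝ → ℝ → ℝ}

lemma tauSeq_zero : tauSeq T ω δ 0 = 0 := rfl

lemma bddBelow_tauSeq_succ_set (n : ℕ) :
    BddBelow ({u : ℝ | tauSeq T ω δ n < u ∧ u ≤ T ∧ δ ≤ ω (tauSeq T ω δ n) u} ∪ {T}) := by
  refine ⟨min (tauSeq T ω δ n) T, ?_⟩
  rintro u (⟨hu, -, -⟩ | rfl)
  · exact min_le_of_left_le hu.le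
  · exact min_le_right _ _

lemma tauSeq_succ_le_right (n : ℕ) : tauSeq T ω δ (n + 1) ≤ T :=
  csInf_le (bddBelow_tauSeq_succ_set n) (Or.inr rfl)

lemma tauSeq_succ_le_of_le {n : ℕ} {u : ℝ} (hnu : tauSeq T ω δ n < u) (huT : u ≤ T)
    (hδu : δ ≤ ω (tauSeq T ω δ n) u) : tauSeq T ω δ (n + 1) ≤ u :=
  csInf_le (bddBelow_tauSeq_succ_set n) (Or.inl ⟨hnu, huT, hδu⟩)

lemma tauSeq_le_right (hT : 0 ≤ T) : ∀ n, tauSeq T ω δ n ≤ T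
  | 0 => hT
  | _ + 1 => tauSeq_succ_le_right _

lemma tauSeq_monotone (hT : 0 ≤ T) : Monotone (tauSeq T ω δ) := by
  refine monotone_nat_of_le_succ fun n => le_csInf ⟨T, Or.inr rfl⟩ ?_
  rintro u (⟨hu, -, -⟩ | rfl)
  · exact hu.le
  · exact tauSeq_le_right hT n

lemma tauSeq_nonneg (hT : 0 ≤ T) (n : ℕ) : 0 ≤ tauSeq T ω δ n :=
  tauSeq_monotone hT (Nat.zero_le n)

lemma control_lt_of_lt_tauSeq_succ (hδ : 0 < δ) (hT : 0 ≤ T)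
    (hzero : ∀ t, 0 ≤ t → t ≤ T → ω t t = 0) {n : ℕ} {u : ℝ}
    (hnu : tauSeq T ω δ n ≤ u) (hu : u < tauSeq T ω δ (n + 1)) (huT : u ≤ T) :
    ω (tauSeq T ω δ n) u < δ := by
  rcases hnu.eq_or_lt with rfl | hnu
  · rw [hzero _ (tauSeq_nonneg hT n) huT]
    exact hδ
  · by_contra! hδu
    exact hu.not_ge (tauSeq_succ_le_of_le hnu huT hδu)

/-- The infimum defining `τ (n + 1)` is attained: the set of admissible `u` is closed by continuity. -/
lemma le_control_tauSeq_succ (hT : 0 ≤ T)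
    (hcont : ContinuousOn (fun p : ℝ × ℝ => ω p.1 p.2)
      {p : ℝ × ℝ | 0 ≤ p.1 ∧ p.1 ≤ p.2 ∧ p.2 ≤ T})
    {n : ℕ} (hn : tauSeq T ω δ (n + 1) < T) :
    δ ≤ ω (tauSeq T ω δ n) (tauSeq T ω δ (n + 1)) := by
  set a := tauSeq T ω δ n
  set S := {u : ℝ | a < u ∧ u ≤ T ∧ δ ≤ ω a u}
  have hmem : tauSeq T ω δ (n + 1) ∈ closure S := by
    have h := csInf_mem_closure (s := S ∪ {T}) ⟨T, Or.inr rfl⟩ (bddBelow_tauSeq_succ_set n)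
    rw [closure_union, closure_singleton] at h
    exact h.resolve_right hn.ne
  have hslice : ContinuousOn (fun u => ω a u) (Icc a T) :=
    hcont.comp (continuous_const.prodMk continuous_id).continuousOn
      fun u hu => ⟨tauSeq_nonneg hT n, hu.1, hu.2⟩
  have hclosed : IsClosed (Icc a T ∩ (fun u => ω a u) ⁻¹' Ici δ) :=
    hslice.preimage_isClosed_of_isClosed isClosed_Icc isClosed_Ici
  have hsub : S ⊆ Icc a T ∩ (fun u => ω a u) ⁻¹' Ici δ :=
    fun u ⟨hau, huT, hδu⟩ => ⟨⟨hau.le, huT⟩, hδu⟩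
  exact (closure_minimal hsub hclosed hmem).2

lemma mul_le_control_tauSeq_add (hT : 0 ≤ T)
    (hzero : ∀ t, 0 ≤ t → t ≤ T → ω t t = 0)
    (hsuper : ∀ s t u, 0 ≤ s → s ≤ t → t ≤ u → u ≤ T → ω s t + ω t u ≤ ω s u)
    (hcont : ContinuousOn (fun p : ℝ × ℝ => ω p.1 p.2)
      {p : ℝ × ℝ | 0 ≤ p.1 ∧ p.1 ≤ p.2 ∧ p.2 ≤ T})
    (i : ℕ) : ∀ n : ℕ, tauSeq T ω δ (i + n) < T →
      (n : ℝ) * δ ≤ ω (tauSeq T ω δ i) (tauSeq T ω δ (i + n))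
  | 0, _ => by simp [hzero _ (tauSeq_nonneg hT i) (tauSeq_le_right hT i)]
  | n + 1, hn => by
    have hprev := mul_le_control_tauSeq_add hT hzero hsuper hcont i n
      ((tauSeq_monotone hT (Nat.le_succ _)).trans_lt hn)
    have hstep := le_control_tauSeq_succ (n := i + n) hT hcont hn
    have hsum := hsuper (tauSeq T ω δ i) (tauSeq T ω δ (i + n)) (tauSeq T ω δ (i + n + 1))
      (tauSeq_nonneg hT i) (tauSeq_monotone hT (Nat.le_add_right i n))
      (tauSeq_monotone hT (Nat.le_succ _)) (tauSeq_le_right hT _)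
    rw [← add_assoc]
    push_cast
    linarith

lemma bddAbove_tauSeq_lt (hT : 0 ≤ T) (hδ : 0 < δ)
    (hzero : ∀ t, 0 ≤ t → t ≤ T → ω t t = 0)
    (hnonneg : ∀ s t, 0 ≤ s → s ≤ t → t ≤ T → 0 ≤ ω s t)
    (hsuper : ∀ s t u, 0 ≤ s → s ≤ t → t ≤ u → u ≤ T → ω s t + ω t u ≤ ω s u)
    (hcont : ContinuousOn (fun p : ℝ × ℝ => ω p.1 p.2)
      {p : ℝ × ℝ | 0 ≤ p.1 ∧ p.1 ≤ p.2 ∧ p.2 ≤ T}) :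
    BddAbove {n : ℕ | tauSeq T ω δ n < T} := by
  refine ⟨⌊ω 0 T / δ⌋₊, fun n hn => Nat.le_floor ?_⟩
  have hchain := mul_le_control_tauSeq_add hT hzero hsuper hcont 0 n (by simpa using hn)
  rw [zero_add, tauSeq_zero] at hchain
  have htail := hsuper 0 (tauSeq T ω δ n) T le_rfl (tauSeq_nonneg hT n) (tauSeq_le_right hT n) le_rfl
  have hnn := hnonneg (tauSeq T ω δ n) T (tauSeq_nonneg hT n) (tauSeq_le_right hT n) le_rfl
  rw [le_div_iff₀ hδ]
  linarith

lemma Ncount_le_of_le_tauSeq (hT : 0 ≤ T) {M : ℕ} (hM : T ≤ tauSeq T ω δ M) :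
    Ncount T ω δ ≤ M :=
  csSup_le' fun _ hn => le_of_not_gt fun hMn =>
    (hM.trans (tauSeq_monotone hT hMn.le)).not_gt hn

end TauSeq

section TwoScales

variable {T δ Δ : ℝ} {ω : ℝ → ℝ → ℝ}

lemma tauSeq_succ_le_tauSeq_add (hT : 0 ≤ T) (hΔ : 0 < Δ) {m : ℕ} (hm : Δ ≤ m * δ)
    (hzero : ∀ t, 0 ≤ t → t ≤ T → ω t t = 0)
    (hnonneg : ∀ s t, 0 ≤ s → s ≤ t → t ≤ T → 0 ≤ ω s t)
    (hsuper : ∀ s t u, 0 ≤ s → s ≤ t → t ≤ u → u ≤ T → ω s t + ω t u ≤ ω s u)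
    (hcont : ContinuousOn (fun p : ℝ × ℝ => ω p.1 p.2)
      {p : ℝ × ℝ | 0 ≤ p.1 ∧ p.1 ≤ p.2 ∧ p.2 ≤ T})
    {i k : ℕ} (hki : tauSeq T ω Δ k ≤ tauSeq T ω δ i) (hiT : tauSeq T ω δ (i + m) < T) :
    tauSeq T ω Δ (k + 1) ≤ tauSeq T ω δ (i + m) := by
  set s := tauSeq T ω Δ k
  set t := tauSeq T ω δ i
  set u := tauSeq T ω δ (i + m)
  have htu : t ≤ u := tauSeq_monotone hT (Nat.le_add_right i m)
  by_contra! hu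
  have hchain : (m : ℝ) * δ ≤ ω t u := mul_le_control_tauSeq_add hT hzero hsuper hcont i m hiT
  have hsum := hsuper s t u (tauSeq_nonneg hT k) hki htu hiT.le
  have hst := hnonneg s t (tauSeq_nonneg hT k) hki (htu.trans hiT.le)
  have hsu : ω s u < Δ := control_lt_of_lt_tauSeq_succ hΔ hT hzero (hki.trans htu) hu hiT.le
  linarith

lemma tauSeq_le_tauSeq_mul (hT : 0 ≤ T) (hΔ : 0 < Δ) {m : ℕ} (hm : Δ ≤ m * δ)
    (hzero : ∀ t, 0 ≤ t → t ≤ T → ω t t = 0)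
    (hnonneg : ∀ s t, 0 ≤ s → s ≤ t → t ≤ T → 0 ≤ ω s t)
    (hsuper : ∀ s t u, 0 ≤ s → s ≤ t → t ≤ u → u ≤ T → ω s t + ω t u ≤ ω s u)
    (hcont : ContinuousOn (fun p : ℝ × ℝ => ω p.1 p.2)
      {p : ℝ × ℝ | 0 ≤ p.1 ∧ p.1 ≤ p.2 ∧ p.2 ≤ T}) :
    ∀ q : ℕ, tauSeq T ω δ (q * m) < T → tauSeq T ω Δ q ≤ tauSeq T ω δ (q * m)
  | 0, _ => by simp [tauSeq_zero]
  | q + 1, hq => by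
    rw [Nat.succ_mul] at hq ⊢
    refine tauSeq_succ_le_tauSeq_add hT hΔ hm hzero hnonneg hsuper hcont
      (tauSeq_le_tauSeq_mul hT hΔ hm hzero hnonneg hsuper hcont q ?_) hq
    exact (tauSeq_monotone hT (Nat.le_add_right _ m)).trans_lt hq

lemma Ncount_le_mul (hT : 0 ≤ T) (hΔ : 0 < Δ) {m : ℕ} (hm : Δ ≤ m * δ)
    (hzero : ∀ t, 0 ≤ t → t ≤ T → ω t t = 0)
    (hnonneg : ∀ s t, 0 ≤ s → s ≤ t → t ≤ T → 0 ≤ ω s t)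
    (hsuper : ∀ s t u, 0 ≤ s → s ≤ t → t ≤ u → u ≤ T → ω s t + ω t u ≤ ω s u)
    (hcont : ContinuousOn (fun p : ℝ × ℝ => ω p.1 p.2)
      {p : ℝ × ℝ | 0 ≤ p.1 ∧ p.1 ≤ p.2 ∧ p.2 ≤ T}) :
    Ncount T ω δ ≤ (Ncount T ω Δ + 1) * m := by
  refine Ncount_le_of_le_tauSeq hT (le_of_not_gt fun hlt => ?_)
  have hσ := tauSeq_le_tauSeq_mul hT hΔ hm hzero hnonneg hsuper hcont _ hlt
  have hK : Ncount T ω Δ + 1 ≤ Ncount T ω Δ :=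
    le_csSup (bddAbove_tauSeq_lt hT hΔ hzero hnonneg hsuper hcont) (hσ.trans_lt hlt)
  omega

end TwoScales

theorem Ncount_small_scale_le (T δ Δ : ℝ) (hT : 0 ≤ T) (hδ : 0 < δ) (hδΔ : δ ≤ Δ)
    (ω : ℝ → ℝ → ℝ)
    (hzero : ∀ t, 0 ≤ t → t ≤ T → ω t t = 0)
    (hnonneg : ∀ s t, 0 ≤ s → s ≤ t → t ≤ T → 0 ≤ ω s t)
    (hsuper : ∀ s t u, 0 ≤ s → s ≤ t → t ≤ u → u ≤ T → ω s t + ω t u ≤ ω s u)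
    (hcont : ContinuousOn (fun p : ℝ × ℝ => ω p.1 p.2)
      {p : ℝ × ℝ | 0 ≤ p.1 ∧ p.1 ≤ p.2 ∧ p.2 ≤ T}) :
    (Ncount T ω δ : ℝ) ≤ (Δ / δ) * (2 * (Ncount T ω Δ : ℝ) + 2) := by
  have hratio : 1 ≤ Δ / δ := (one_le_div hδ).mpr hδΔ
  set m := ⌈Δ / δ⌉₊
  have hm : Δ ≤ m * δ := (div_le_iff₀ hδ).mp (Nat.le_ceil _)
  have hm_lt : (m : ℝ) < Δ / δ + 1 := Nat.ceil_lt_add_one (by linarith)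
  have hN : (Ncount T ω δ : ℝ) ≤ (Ncount T ω Δ + 1) * m := by
    exact_mod_cast Ncount_le_mul hT (hδ.trans_le hδΔ) hm hzero hnonneg hsuper hcont
  calc (Ncount T ω δ : ℝ) ≤ (Ncount T ω Δ + 1) * m := hN
    _ ≤ (Ncount T ω Δ + 1) * (2 * (Δ / δ)) := by gcongr; linarith
    _ = (Δ / δ) * (2 * (Ncount T ω Δ : ℝ) + 2) := by ring
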